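/- (Duality gap at a new regularization parameter) Fix γ ∈ (0,1], a finite index set T, symmetric matrices H_t ∈ ℝ^{d×d} (t ∈ T), and λ₀, λ₁ > 0. Let α* ∈ [0,1]^T and Γ* ⪰ O be dual feasible, set M₀* := M_{λ₀}(α*, Γ*), and suppose strong duality holds at λ₀: P_{λ₀}(M₀*) = D_{λ₀}(α*, Γ*). Then P_{λ₁}(M₀*) − D_{λ₁}(α*, Γ*) = ((λ₀−λ₁)²/(2λ₁))·‖M₀*‖_F². -/
import Mathlib

open scoped BigOperators
open scoped Matrix

/-- Frobenius inner product ⟨A,B⟩ = tr(Aᵀ B). -/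
noncomputable def frob {d : ℕ} (A B : Matrix (Fin d) (Fin d) ℝ) : ℝ :=
  Matrix.trace (Aᵀ * B)

/-- Frobenius norm ‖A‖_F = √⟨A,A⟩. -/
noncomputable def frobNorm {d : ℕ} (A : Matrix (Fin d) (Fin d) ℝ) : ℝ :=
  Real.sqrt (frob A A)

/-- Smoothed hinge loss ℓ_γ. -/
noncomputable def shinge (γ x : ℝ) : ℝ :=
  if 1 < x then 0 else if 1 - γ ≤ x then (1 - x) ^ 2 / (2 * γ) else 1 - x - γ / 2

/-- Derivative of the smoothed hinge loss ℓ_γ'. -/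
noncomputable def shinge' (γ x : ℝ) : ℝ :=
  if 1 < x then 0 else if 1 - γ ≤ x then -(1 - x) / γ else -1

/-- Primal objective P_λ(M) = Σ_t ℓ_γ(⟨M,H_t⟩) + (λ/2)‖M‖_F². -/
noncomputable def Pobj {d : ℕ} {ι : Type*} (γ lam : ℝ) (T : Finset ι)
    (H : ι → Matrix (Fin d) (Fin d) ℝ) (M : Matrix (Fin d) (Fin d) ℝ) : ℝ :=
  (∑ t ∈ T, shinge γ (frob M (H t))) + lam / 2 * frobNorm M ^ 2

/-- Gradient ∇P_λ(M) = Σ_t ℓ_γ'(⟨M,H_t⟩) H_t + λ M. -/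
noncomputable def gradP {d : ℕ} {ι : Type*} (γ lam : ℝ) (T : Finset ι)
    (H : ι → Matrix (Fin d) (Fin d) ℝ) (M : Matrix (Fin d) (Fin d) ℝ) :
    Matrix (Fin d) (Fin d) ℝ :=
  (∑ t ∈ T, shinge' γ (frob M (H t)) • H t) + lam • M

/-- M_λ(α,Γ) = (1/λ)(Σ_t α_t H_t + Γ). -/
noncomputable def Mlam {d : ℕ} {ι : Type*} (lam : ℝ) (T : Finset ι)
    (H : ι → Matrix (Fin d) (Fin d) ℝ) (α : ι → ℝ) (Γ : Matrix (Fin d) (Fin d) ℝ) :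
    Matrix (Fin d) (Fin d) ℝ :=
  (1 / lam) • ((∑ t ∈ T, α t • H t) + Γ)

/-- Dual objective D_λ(α,Γ) = −(γ/2)‖α‖₂² + Σ_t α_t − (λ/2)‖M_λ(α,Γ)‖_F². -/
noncomputable def Dobj {d : ℕ} {ι : Type*} (γ lam : ℝ) (T : Finset ι)
    (H : ι → Matrix (Fin d) (Fin d) ℝ) (α : ι → ℝ) (Γ : Matrix (Fin d) (Fin d) ℝ) : ℝ :=
  -(γ / 2) * (∑ t ∈ T, α t ^ 2) + (∑ t ∈ T, α t) -
    lam / 2 * frobNorm (Mlam lam T H α Γ) ^ 2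

lemma frob_self_nonneg {d : ℕ} (A : Matrix (Fin d) (Fin d) ℝ) : 0 ≤ frob A A := by
  unfold frob
  simp only [Matrix.trace, Matrix.diag, Matrix.mul_apply, Matrix.transpose_apply]
  exact Finset.sum_nonneg fun i _ => Finset.sum_nonneg fun j _ => mul_self_nonneg _

lemma frobNorm_sq {d : ℕ} (A : Matrix (Fin d) (Fin d) ℝ) :
    frobNorm A ^ 2 = frob A A :=
  Real.sq_sqrt (frob_self_nonneg A)

lemma frob_smul_self {d : ℕ} (c : ℝ) (A : Matrix (Fin d) (Fin d) ℝ) :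
    frob (c • A) (c • A) = c ^ 2 * frob A A := by
  unfold frob
  rw [Matrix.transpose_smul, Matrix.smul_mul, Matrix.mul_smul, Matrix.trace_smul,
    Matrix.trace_smul]
  simp [smul_smul]; ring

/-- Duality gap at a new regularization parameter. -/
theorem gap_at_new_lambda {d : ℕ} {ι : Type*} (γ lam0 lam1 : ℝ)
    (hγ : 0 < γ) (hγ1 : γ ≤ 1) (hlam0 : 0 < lam0) (hlam1 : 0 < lam1)
    (T : Finset ι) (H : ι → Matrix (Fin d) (Fin d) ℝ)
    (hH : ∀ t ∈ T, (H t).IsSymm)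
    (αstar : ι → ℝ) (Γstar : Matrix (Fin d) (Fin d) ℝ)
    (hα : ∀ t ∈ T, 0 ≤ αstar t ∧ αstar t ≤ 1) (hΓ : Γstar.PosSemidef)
    (hsd : Pobj γ lam0 T H (Mlam lam0 T H αstar Γstar) = Dobj γ lam0 T H αstar Γstar) :
    Pobj γ lam1 T H (Mlam lam0 T H αstar Γstar) - Dobj γ lam1 T H αstar Γstar =
      (lam0 - lam1) ^ 2 / (2 * lam1) * frobNorm (Mlam lam0 T H αstar Γstar) ^ 2 := by
  set X : Matrix (Fin d) (Fin d) ℝ := (∑ t ∈ T, αstar t • H t) + Γstar with hX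
  have hM : ∀ l : ℝ, Mlam l T H αstar Γstar = (1 / l) • X := fun l => rfl
  have hsq : ∀ l : ℝ, frobNorm (Mlam l T H αstar Γstar) ^ 2 = (1 / l) ^ 2 * frob X X := by
    intro l
    rw [frobNorm_sq, hM, frob_smul_self]
  unfold Pobj Dobj at hsd ⊢
  rw [hsq lam0] at hsd
  rw [hsq lam0, hsq lam1]
  have hl0 : lam0 ≠ 0 := ne_of_gt hlam0
  have hl1 : lam1 ≠ 0 := ne_of_gt hlam1
  have hkey : (∑ t ∈ T, shinge γ (frob (Mlam lam0 T H αstar Γstar) (H t)))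
      = (-(γ / 2) * (∑ t ∈ T, αstar t ^ 2) + (∑ t ∈ T, αstar t))
        - lam0 * ((1 / lam0) ^ 2 * frob X X) := by
    linarith [hsd]
  rw [hkey]
  field_simp
  ring
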